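/- Let A be a groupoid and let N_A be the group of pairs (F, σ), with F a strict automorphism of A and σ : 𝟭_A ⟹ F a natural transformation, under (G, γ) ⊛ (F, σ) := (F ⋙ G, x ↦ σ(x)·γ(F(x))). Then N_A acts on the set of strict automorphisms of A by (F,σ) • G := G ⋙ F, and the groupoid SAut(A) — whose objects are the strict automorphisms of A and whose morphisms from F to G are the natural transformations F ⟹ G, with vertical composition — is isomorphic as a category to the action groupoid of this N_A-action (objects: strict automorphisms; morphisms from G to G ⋙ F: the elements (F,σ) of N_A). An isomorphism is given by the identity on objects, sending the action-groupoid morphism determined by (F,σ) ∈ N_A with source G to the natural transformation G ⟹ G ⋙ F whose component at an object a is σ(G(a)). -/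

import Mathlib

/-!
Statement 1: For a groupoid `A`, the group `N_A` of pairs `(F, σ)` acts on strict
automorphisms by `(F,σ) • G := G ⋙ F`, and the groupoid `SAut(A)` (objects: strict
automorphisms, morphisms: natural transformations, vertical composition) is
isomorphic as a category to the action groupoid of this action, via the identity on
objects, sending the action-groupoid morphism determined by `(F,σ)` with source `G`
to the natural transformation with component `σ(G(a))` at `a`.
-/

open CategoryTheory

universe v u

structure GrpdAut (A : Type u) [Groupoid A] where
  F : A ⥤ A
  inv : A ⥤ A
  comp_inv : F ⋙ inv = 𝟭 A
  inv_comp : inv ⋙ F = 𝟭 A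

variable {A : Type u} [Groupoid A]

def GrpdAut.one (A : Type u) [Groupoid A] : GrpdAut A := ⟨𝟭 A, 𝟭 A, rfl, rfl⟩

/-- Composition of strict automorphisms, written left-to-right: `f.comp g = f ⋙ g`. -/
def GrpdAut.comp (f g : GrpdAut A) : GrpdAut A where
  F := f.F ⋙ g.F
  inv := g.inv ⋙ f.inv
  comp_inv := by
    rw [Functor.assoc, ← Functor.assoc g.F, g.comp_inv, Functor.id_comp, f.comp_inv]
  inv_comp := by
    rw [Functor.assoc, ← Functor.assoc f.inv, f.inv_comp, Functor.id_comp, g.inv_comp]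

/-- An element of `N_A`: a strict automorphism `F` with a natural transformation
`σ : 𝟭_A ⟹ F`. -/
structure NElem (A : Type u) [Groupoid A] where
  F : GrpdAut A
  σ : 𝟭 A ⟶ F.F

def NElem.one (A : Type u) [Groupoid A] : NElem A := ⟨GrpdAut.one A, 𝟙 (𝟭 A)⟩

/-- `(G, γ) ⊛ (F, σ) := (F ⋙ G, x ↦ σ(x)·γ(F(x)))`; `NElem.mul g f = g ⊛ f`. -/
def NElem.mul (g f : NElem A) : NElem A where
  F := f.F.comp g.F
  σ :=
    { app := fun x => f.σ.app x ≫ g.σ.app (f.F.F.obj x)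
      naturality := by
        intro x y h
        have h1 := f.σ.naturality h
        have h2 := g.σ.naturality (f.F.F.map h)
        simp only [Functor.id_map] at h1 h2
        show h ≫ f.σ.app y ≫ g.σ.app (f.F.F.obj y) =
          (f.σ.app x ≫ g.σ.app (f.F.F.obj x)) ≫ g.F.F.map (f.F.F.map h)
        rw [← Category.assoc, h1, Category.assoc, h2, Category.assoc] }

theorem NElem.mul_one' (u : NElem A) : NElem.mul u (NElem.one A) = u := by
  rcases u with ⟨F, σ⟩
  show NElem.mk F _ = NElem.mk F σ
  congr 1
  ext x
  show 𝟙 x ≫ σ.app x = σ.app x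
  simp

theorem NElem.one_mul' (u : NElem A) : NElem.mul (NElem.one A) u = u := by
  rcases u with ⟨F, σ⟩
  show NElem.mk F _ = NElem.mk F σ
  congr 1
  ext x
  show σ.app x ≫ 𝟙 _ = σ.app x
  simp

theorem NElem.mul_assoc' (w v u : NElem A) :
    NElem.mul (NElem.mul w v) u = NElem.mul w (NElem.mul v u) := by
  show NElem.mk ((u.F.comp v.F).comp w.F) _ = NElem.mk ((u.F.comp v.F).comp w.F) _
  congr 1
  ext x
  show u.σ.app x ≫ (v.σ.app (u.F.F.obj x) ≫ w.σ.app (v.F.F.obj (u.F.F.obj x))) =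
    (u.σ.app x ≫ v.σ.app (u.F.F.obj x)) ≫ w.σ.app (v.F.F.obj (u.F.F.obj x))
  rw [Category.assoc]

/-- The action of `N_A` on strict automorphisms: `(F,σ) • G := G ⋙ F`. -/
def NElem.act (n : NElem A) (G : GrpdAut A) : GrpdAut A := G.comp n.F

/-- `SAut(A)` as a category: objects are strict automorphisms of `A`, morphisms are
natural transformations, composed vertically. -/
def SAutCat (A : Type u) [Groupoid A] :=
  InducedCategory (A ⥤ A) (fun F : GrpdAut A => F.F)

instance : Category (SAutCat A) where
  Hom X Y := GrpdAut.F X ⟶ GrpdAut.F Y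
  id X := 𝟙 (GrpdAut.F X)
  comp f g := f ≫ g

/-- The action groupoid of the `N_A`-action on strict automorphisms: objects are
strict automorphisms; a morphism from `G` to `G'` is an element `n = (F,σ)` of `N_A`
with `n • G = G'` (i.e. `G ⋙ F = G'`). -/
def NActCat (A : Type u) [Groupoid A] := GrpdAut A

instance : Category (NActCat A) where
  Hom G G' := { n : NElem A // n.act G = G' }
  id G := ⟨NElem.one A, rfl⟩
  comp {G G₁ G₂} u v :=
    ⟨NElem.mul v.1 u.1, by
      show GrpdAut.comp G ((NElem.mul v.1 u.1).F) = G₂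
      rw [show GrpdAut.comp G ((NElem.mul v.1 u.1).F) =
          GrpdAut.comp (GrpdAut.comp G u.1.F) v.1.F from rfl]
      rw [show GrpdAut.comp G u.1.F = G₁ from u.2]
      exact v.2⟩
  id_comp := fun u => Subtype.ext (NElem.mul_one' u.1)
  comp_id := fun u => Subtype.ext (NElem.one_mul' u.1)
  assoc := fun u v w => Subtype.ext (NElem.mul_assoc' w.1 v.1 u.1).symm

theorem natTrans_app_eqToHom {H : A ⥤ A} (σ : 𝟭 A ⟶ H) {c c' : A} (e : c = c') :
    σ.app c = eqToHom e ≫ σ.app c' ≫ eqToHom (congrArg H.obj e).symm := by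
  cases e; simp

/-- The comparison functor from the action groupoid to `SAut(A)`: the identity on
objects; the morphism determined by `n = (F,σ)` with source `G` is sent to the
natural transformation `G ⟹ G ⋙ F` with component `σ(G(a))` at `a` (the
identification of `G ⋙ F` with the recorded target is via `eqToHom`). -/
def actToSAut (A : Type u) [Groupoid A] : NActCat A ⥤ SAutCat A where
  obj G := G
  map {G G'} u :=
    { app := fun a =>
        u.1.σ.app (G.F.obj a) ≫ eqToHom (congrArg (fun H => GrpdAut.F H |>.obj a) u.2)
      naturality := by
        intro a b h
        have h1 := u.1.σ.naturality (G.F.map h)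
        simp only [Functor.id_map] at h1
        have h2 := Functor.congr_hom (congrArg GrpdAut.F u.2) h
        show G.F.map h ≫ _ = _
        rw [← Category.assoc, h1, Category.assoc, Category.assoc]
        congr 1
        rw [show u.1.F.F.map (G.F.map h) = ((u.1.act G)).F.map h from rfl, h2]
        erw [Category.assoc, Category.assoc, eqToHom_trans, eqToHom_refl, Category.comp_id]
        rfl }
  map_id G := by
    apply NatTrans.ext
    funext a
    show 𝟙 _ ≫ eqToHom _ = _
    simp
    rfl
  map_comp {G G₁ G₂} u v := by
    apply NatTrans.ext
    funext a
    have e : u.1.F.F.obj (G.F.obj a) = G₁.F.obj a :=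
      congrArg (fun H => GrpdAut.F H |>.obj a) u.2
    show (u.1.σ.app (G.F.obj a) ≫ v.1.σ.app (u.1.F.F.obj (G.F.obj a))) ≫ eqToHom _ =
      (u.1.σ.app (G.F.obj a) ≫ eqToHom _) ≫ (v.1.σ.app (G₁.F.obj a) ≫ eqToHom _)
    rw [natTrans_app_eqToHom v.1.σ e]
    simp only [Category.assoc]
    erw [eqToHom_trans]

/-!
The comparison functor is the identity on objects, so it is an isomorphism of categories as
soon as it is fully faithful. A strict automorphism is determined by its underlying functor
(inverses are unique), so a morphism `G ⟶ G'` of the action groupoid is an element `(F, σ)` with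
`F = G⁻¹ ⋙ G'`, and `σ` can be recovered from the components `σ(G(a))` because `G` is bijective
on objects: a natural transformation `τ : G ⟹ G'` comes from exactly one such element, namely
`(G⁻¹ ⋙ G', x ↦ τ(G⁻¹(x)))`.
-/

theorem CategoryTheory.Functor.FullyFaithful.exists_inverse_of_bijective_obj
    {C D : Type*} [Category C] [Category D] {Φ : C ⥤ D} (hΦ : Φ.FullyFaithful)
    (hobj : Function.Bijective Φ.obj) : ∃ Ψ : D ⥤ C, Φ ⋙ Ψ = 𝟭 C ∧ Ψ ⋙ Φ = 𝟭 D := by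
  obtain ⟨ψ, hψΦ, hΦψ⟩ := Function.bijective_iff_has_inverse.mp hobj
  let Ψ : D ⥤ C :=
    { obj := ψ
      map {Y Y'} f := hΦ.preimage (eqToHom (hΦψ Y) ≫ f ≫ eqToHom (hΦψ Y').symm)
      map_id := by simp
      map_comp := by simp [← hΦ.preimage_comp] }
  refine ⟨Ψ, Functor.ext hψΦ fun X Y f => hΦ.map_injective ?_,
    Functor.ext hΦψ fun Y Y' f => ?_⟩
  · simp [Ψ, eqToHom_map]
  · simp [Ψ]

theorem GrpdAut.inv_eq_of_F_eq {f g : GrpdAut A} (h : f.F = g.F) : f.inv = g.inv :=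
  calc f.inv = (g.inv ⋙ g.F) ⋙ f.inv := by rw [g.inv_comp, Functor.id_comp]
    _ = g.inv := by rw [Functor.assoc, ← h, f.comp_inv, Functor.comp_id]

theorem GrpdAut.ext {f g : GrpdAut A} (h : f.F = g.F) : f = g := by
  have h' := GrpdAut.inv_eq_of_F_eq h
  cases f; cases g
  cases h; cases h'
  rfl

theorem GrpdAut.inv_obj_F_obj (f : GrpdAut A) (a : A) : f.inv.obj (f.F.obj a) = a :=
  Functor.congr_obj f.comp_inv a

theorem GrpdAut.F_obj_inv_obj (f : GrpdAut A) (a : A) : f.F.obj (f.inv.obj a) = a :=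
  Functor.congr_obj f.inv_comp a

def GrpdAut.symm (f : GrpdAut A) : GrpdAut A := ⟨f.inv, f.F, f.inv_comp, f.comp_inv⟩

theorem GrpdAut.comp_symm_comp (f g : GrpdAut A) : f.comp (f.symm.comp g) = g :=
  GrpdAut.ext <| by
    change f.F ⋙ f.inv ⋙ g.F = g.F
    rw [← Functor.assoc, f.comp_inv, Functor.id_comp]

theorem GrpdAut.symm_comp_comp (f g : GrpdAut A) : f.symm.comp (f.comp g) = g :=
  GrpdAut.ext <| by
    change f.inv ⋙ f.F ⋙ g.F = g.F
    rw [← Functor.assoc, f.inv_comp, Functor.id_comp]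

theorem NElem.ext {m n : NElem A} (hF : m.F = n.F)
    (hσ : m.σ ≫ eqToHom (congrArg GrpdAut.F hF) = n.σ) : m = n := by
  cases m; cases n
  cases hF
  simp only [eqToHom_refl, Category.comp_id] at hσ
  rw [hσ]

def NElem.ofHom {G G' : GrpdAut A} (τ : G.F ⟶ G'.F) : NElem A where
  F := G.symm.comp G'
  σ := eqToHom G.inv_comp.symm ≫ Functor.whiskerLeft G.inv τ

theorem NElem.ofHom_σ_app {G G' : GrpdAut A} (τ : G.F ⟶ G'.F) (x : A) :
    (NElem.ofHom τ).σ.app x =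
      eqToHom (G.F_obj_inv_obj x).symm ≫ τ.app (G.inv.obj x) := by
  change (eqToHom G.inv_comp.symm ≫ Functor.whiskerLeft G.inv τ : 𝟭 A ⟶ G.inv ⋙ G'.F).app x = _
  rw [NatTrans.comp_app, eqToHom_app, Functor.whiskerLeft_app]

theorem actToSAut_map_ofHom {G G' : GrpdAut A} (τ : G.F ⟶ G'.F) :
    (actToSAut A).map (X := G) (Y := G') ⟨NElem.ofHom τ, G.comp_symm_comp G'⟩ = τ := by
  refine NatTrans.ext (funext fun a => ?_)
  change (NElem.ofHom τ).σ.app (G.F.obj a) ≫ eqToHom _ = τ.app a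
  rw [NElem.ofHom_σ_app]
  -- unfold `GrpdAut.comp` in the objects, so that the `eqToHom` simp lemmas can fire
  change (eqToHom (G.F_obj_inv_obj _).symm ≫ τ.app (G.inv.obj (G.F.obj a))) ≫
    eqToHom (congrArg G'.F.obj (G.inv_obj_F_obj a)) = τ.app a
  simp [NatTrans.congr τ (G.inv_obj_F_obj a), eqToHom_map]

theorem NElem.ofHom_eq_of_app {G : GrpdAut A} (n : NElem A) (τ : G.F ⟶ (n.act G).F)
    (hτ : ∀ a, τ.app a = n.σ.app (G.F.obj a)) : NElem.ofHom τ = n := by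
  refine NElem.ext (G.symm_comp_comp n.F) (NatTrans.ext (funext fun x => ?_))
  rw [NatTrans.comp_app, eqToHom_app, NElem.ofHom_σ_app, hτ]
  change (eqToHom (G.F_obj_inv_obj x).symm ≫ n.σ.app (G.F.obj (G.inv.obj x))) ≫
    eqToHom (congrArg n.F.F.obj (G.F_obj_inv_obj x)) = n.σ.app x
  simp [NatTrans.congr n.σ (G.F_obj_inv_obj x), eqToHom_map]

def fullyFaithfulActToSAut : (actToSAut A).FullyFaithful where
  preimage {G G'} τ := ⟨NElem.ofHom τ, G.comp_symm_comp G'⟩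
  map_preimage := actToSAut_map_ofHom
  preimage_map := by
    rintro G _ ⟨n, rfl⟩
    exact Subtype.ext (NElem.ofHom_eq_of_app n _ fun _ => Category.comp_id _)

/-- `N_A` acts on strict automorphisms by `(F,σ) • G = G ⋙ F`,
and the comparison functor `actToSAut` — identity on objects, sending the morphism
determined by `(F,σ)` with source `G` to the natural transformation with components
`σ(G(a))` — is an isomorphism of categories from the action groupoid to `SAut(A)`. -/
theorem sAut_iso_action_groupoid (A : Type u) [Groupoid A] :
    (∀ G : GrpdAut A, (NElem.one A).act G = G) ∧
    (∀ n m : NElem A, ∀ G : GrpdAut A, (NElem.mul n m).act G = n.act (m.act G)) ∧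
    (∀ G : NActCat A, (actToSAut A).obj G = G) ∧
    (∃ Ψ : SAutCat A ⥤ NActCat A,
      actToSAut A ⋙ Ψ = 𝟭 (NActCat A) ∧ Ψ ⋙ actToSAut A = 𝟭 (SAutCat A)) :=
  ⟨fun G => GrpdAut.ext G.F.comp_id, fun _ _ _ => rfl, fun _ => rfl,
    fullyFaithfulActToSAut.exists_inverse_of_bijective_obj
      ⟨fun _ _ h => h, fun G => ⟨G, rfl⟩⟩⟩
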